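/- There exist a sequence of positive reals (b(i))_{i≥1} with sup_{i≥1} b(i) = ∞, a sequence of reals (c(i))_{i≥1}, and a constant β with 0 < β < 1/2, such that for every i ≥ 1: μ{ x ∈ X : |c(i) + ∑_{j=1}^{i} a_{μ,j}(x)| ≤ b(i) } ≥ 1 − 2β, μ{ x ∈ X : c(i) + ∑_{j=1}^{i} a_{μ,j}(x) ≥ b(i) } ≥ β, and μ{ x ∈ X : c(i) + ∑_{j=1}^{i} a_{μ,j}(x) ≤ −b(i) } ≥ β. -/

import Mathlib

/-
Since `μ_j` puts mass `1/2` on `0` and spreads the other half uniformly,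
`a_{μ,j} = log 2 + j log 5 · [x_j ≠ 0]`, and the events `x_j ≠ 0` are independent fair coins.
Centring the partial sum therefore leaves `(log 5 / 2) · Z_i` with `Z_i = ∑_{j ≤ i} ± j`, a
symmetric integer-valued variable. Conditioning on the sign of the last term and reflecting the
other signs gives `P(Z_i ≥ i) ≥ 1/4`, so the least `m_i` with `P(Z_i > m_i) ≤ 1/8` is at least
`i`. Then `b(i) = (log 5 / 2) m_i` and `β = 1/8` work, the lower tail by symmetry.
-/

open MeasureTheory ENNReal Filter

/-- The coordinate space: Lean index `n` is paper index `n+1`, so this is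
`X_{n+1} = {0,1,…,5^{n+1}}`. -/
abbrev Xc (n : ℕ) : Type := Fin (5 ^ (n + 1) + 1)

/-- The weight of a point of `X_{n+1}`: `μ_{n+1}(0) = 1/2`, `μ_{n+1}(i) = 1/(2·5^{n+1})`
for `i ≠ 0`. -/
noncomputable def w (n : ℕ) (a : Xc n) : ℝ≥0∞ :=
  if a = 0 then 1 / 2 else 1 / (2 * 5 ^ (n + 1))

/-- The full product space `X = ∏_{n ≥ 1} X_n`. -/
abbrev XX : Type := (n : ℕ) → Xc n

/-- The cylinder `Z_A` determined by a set `A` of configurations on a finite set `Γ`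
of coordinates. -/
def cylSet (Γ : Finset ℕ) (A : Set ((i : Γ) → Xc i)) : Set XX :=
  {x | (fun i : Γ => x i) ∈ A}

/-- The point cylinder `Z_u`. -/
def cylPt (Γ : Finset ℕ) (u : (i : Γ) → Xc i) : Set XX := cylSet Γ {u}

/-- `μ` is the product measure `⊗ μ_n` iff every point cylinder gets the product of the
weights of its coordinates. (This property determines the product measure uniquely.) -/
def IsProductMeasure (μ : Measure XX) : Prop :=
  ∀ (Γ : Finset ℕ) (u : (i : Γ) → Xc i), μ (cylPt Γ u) = ∏ i : Γ, w i (u i)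

/-- The real-valued weight `μ_{n+1}(a)`. -/
noncomputable def wR (n : ℕ) (a : Xc n) : ℝ :=
  if a = 0 then 1 / 2 else 1 / (2 * 5 ^ (n + 1))

/-- The random variable `a_{μ,n+1}(x) = -log μ_{n+1}(x_{n+1})` (Lean index `n`). -/
noncomputable def aMu (n : ℕ) (x : XX) : ℝ := -Real.log (wR n (x n))

open Finset ProbabilityTheory

theorem exists_symmetric_quantile {Ω : Type*} [MeasurableSpace Ω] {μ : Measure Ω}
    [IsProbabilityMeasure μ] {Z : Ω → ℤ} (hZ : Measurable Z)
    (hsymm : ∀ n : ℤ, μ {x | Z x ≤ -n} = μ {x | n ≤ Z x})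
    {β : ℝ≥0∞} (hβ : 0 < β) {k : ℕ} (hk : β < μ {x | k ≤ Z x}) :
    ∃ m : ℕ, k ≤ m ∧ 1 - 2 * β ≤ μ {x | |Z x| ≤ m} ∧
      β ≤ μ {x | m ≤ Z x} ∧ β ≤ μ {x | Z x ≤ -m} := by
  classical
  have htail : ∃ n : ℕ, μ {x | (n : ℤ) < Z x} ≤ β := by
    have hempty : (⋂ n : ℕ, {x | (n : ℤ) < Z x}) = ∅ :=
      Set.eq_empty_of_forall_notMem fun x hx => by
        simpa using Set.mem_iInter.1 hx (Z x).toNat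
    have hlim := tendsto_measure_iInter_atTop (μ := μ) (s := fun n : ℕ => {x | (n : ℤ) < Z x})
      (fun n => (hZ measurableSet_Ioi).nullMeasurableSet)
      (fun a b hab x (hx : (b : ℤ) < Z x) => show (a : ℤ) < Z x by omega)
      ⟨0, measure_ne_top μ _⟩
    rw [hempty, measure_empty] at hlim
    exact ((hlim.eventually (gt_mem_nhds hβ)).exists).imp fun _ => le_of_lt
  have hk_le : k ≤ Nat.find htail := (Nat.le_find_iff htail k).2 fun n hn h =>
    (hk.trans_le (measure_mono fun x (hx : (k : ℤ) ≤ Z x) =>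
      (show (n : ℤ) < Z x by omega))).not_ge h
  have hm_tail := Nat.find_spec htail
  have hm_min : ∀ n < Nat.find htail, β < μ {x | (n : ℤ) < Z x} :=
    fun n hn => not_le.1 (Nat.find_min htail hn)
  generalize Nat.find htail = m at hk_le hm_tail hm_min
  have hm_head : β < μ {x | (m : ℤ) ≤ Z x} := by
    rcases Nat.eq_zero_or_eq_succ_pred m with h0 | hsucc
    · subst h0
      simpa [Nat.le_zero.1 hk_le] using hk
    · convert hm_min m.pred (by omega) using 4 with x
      omega
  refine ⟨m, hk_le, ?_, hm_head.le, (hsymm m).symm ▸ hm_head.le⟩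
  have hcompl : μ {x | |Z x| ≤ m}ᶜ ≤ 2 * β := calc
    μ {x | |Z x| ≤ m}ᶜ
        ≤ μ ({x | (m : ℤ) < Z x} ∪ {x | Z x ≤ -((m + 1 : ℕ) : ℤ)}) :=
      measure_mono fun x hx => by
        simp only [Set.mem_compl_iff, Set.mem_ofPred_eq, abs_le, Set.mem_union] at hx ⊢
        omega
    _ ≤ μ {x | (m : ℤ) < Z x} + μ {x | ((m + 1 : ℕ) : ℤ) ≤ Z x} := by
      rw [← hsymm]; exact measure_union_le _ _
    -- in `ℤ`, `m < z` is by definition `m + 1 ≤ z`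
    _ = μ {x | (m : ℤ) < Z x} + μ {x | (m : ℤ) < Z x} := by
      congr 2 with x
    _ ≤ 2 * β := by rw [two_mul]; exact add_le_add hm_tail hm_tail
  have hmeas : MeasurableSet {x | |Z x| ≤ m} :=
    hZ (MeasurableSet.of_discrete (s := {z : ℤ | |z| ≤ m}))
  rw [tsub_le_iff_right, ← prob_add_prob_compl (μ := μ) hmeas]
  gcongr

lemma uniformOn_univ_preimage_of_bijective {Ω : Type*} [Fintype Ω] [MeasurableSpace Ω]
    [MeasurableSingletonClass Ω] {f : Ω → Ω} (hf : f.Bijective) (s : Set Ω) :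
    uniformOn Set.univ (f ⁻¹' s) = uniformOn Set.univ s := by
  simp only [uniformOn_univ, Measure.count_apply (Set.toFinite _).measurableSet,
    Set.encard_preimage_of_bijective hf]

lemma measure_union_preimage_le_two_mul {Ω : Type*} [MeasurableSpace Ω] {ν : Measure Ω}
    {f : Ω → Ω} (hf : ∀ s, ν (f ⁻¹' s) = ν s) (s : Set Ω) :
    ν (s ∪ f ⁻¹' s) ≤ 2 * ν s := by
  calc ν (s ∪ f ⁻¹' s) ≤ ν s + ν (f ⁻¹' s) := measure_union_le _ _
    _ = 2 * ν s := by rw [hf, two_mul]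

section SignedSum

variable {ι : Type*} [Fintype ι]

def signedSum (c : ι → ℤ) (v : ι → Bool) : ℤ := ∑ j, if v j then c j else -c j

lemma signedSum_not (c : ι → ℤ) (v : ι → Bool) :
    signedSum c (fun j => !v j) = -signedSum c v := by
  simp only [signedSum, ← Finset.sum_neg_distrib]
  exact Finset.sum_congr rfl fun j _ => by by_cases h : v j <;> simp [h]

lemma signedSum_not_of_ne [DecidableEq ι] (c : ι → ℤ) (v : ι → Bool) {j₀ : ι}
    (h : v j₀ = true) :
    signedSum c (fun j => if j = j₀ then v j else !v j) = 2 * c j₀ - signedSum c v := by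
  rw [eq_sub_iff_add_eq, signedSum, signedSum, ← Finset.sum_add_distrib,
    Finset.sum_congr rfl fun j _ => (?_ : _ = if j = j₀ then 2 * c j₀ else 0)]
  · simp
  · by_cases hj : j = j₀
    · subst hj; simp [h]; ring
    · cases v j <;> simp [hj]

lemma uniformOn_signedSum_le_neg [DecidableEq ι] (c : ι → ℤ) (n : ℤ) :
    uniformOn Set.univ {v | signedSum c v ≤ -n} =
      uniformOn Set.univ {v | n ≤ signedSum c v} := by
  rw [← uniformOn_univ_preimage_of_bijective (f := fun v j => !v j)
    (Function.Involutive.bijective fun v => by simp)]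
  congr 1 with v
  simp [signedSum_not]

lemma inv_four_le_uniformOn_le_signedSum [DecidableEq ι] (c : ι → ℤ) (j₀ : ι) :
    4⁻¹ ≤ uniformOn Set.univ {v | c j₀ ≤ signedSum c v} := by
  set ν : Measure (ι → Bool) := uniformOn Set.univ
  set A := {v : ι → Bool | v j₀ = true ∧ c j₀ ≤ signedSum c v}
  set σ : (ι → Bool) → (ι → Bool) := fun v j => !v j
  set τ : (ι → Bool) → (ι → Bool) := fun v j => if j = j₀ then v j else !v j
  have hσ : ∀ s, ν (σ ⁻¹' s) = ν s := uniformOn_univ_preimage_of_bijective <|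
    Function.Involutive.bijective fun v => by simp [σ]
  have hτ : ∀ s, ν (τ ⁻¹' s) = ν s := uniformOn_univ_preimage_of_bijective <|
    Function.Involutive.bijective fun v => by funext j; by_cases hj : j = j₀ <;> simp [τ, hj]
  -- `τ` flips the signs off `j₀`: `τ ⁻¹' A = {v | v j₀ ∧ signedSum c v ≤ c j₀}`
  set B := A ∪ τ ⁻¹' A
  have hB : ∀ w : ι → Bool, w j₀ = true → w ∈ B := fun w hw => by
    by_cases hS : c j₀ ≤ signedSum c w
    · exact Or.inl ⟨hw, hS⟩
    · refine Or.inr ⟨by simp [τ, hw], ?_⟩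
      rw [signedSum_not_of_ne c w hw]
      omega
  have hcover : Set.univ ⊆ B ∪ σ ⁻¹' B := fun v _ => by
    cases hv : v j₀
    · exact Or.inr (hB _ (by simp [σ, hv]))
    · exact Or.inl (hB v hv)
  calc (4 : ℝ≥0∞)⁻¹ = 4⁻¹ * ν Set.univ := by simp [ν]
    _ ≤ 4⁻¹ * (4 * ν A) := by
      gcongr
      calc ν Set.univ ≤ ν (B ∪ σ ⁻¹' B) := measure_mono hcover
        _ ≤ 2 * ν B := measure_union_preimage_le_two_mul hσ B
        _ ≤ 2 * (2 * ν A) := by gcongr; exact measure_union_preimage_le_two_mul hτ A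
        _ = 4 * ν A := by rw [← mul_assoc]; norm_num
    _ = ν A := by rw [← mul_assoc, ENNReal.inv_mul_cancel (by norm_num) (by norm_num), one_mul]
    _ ≤ _ := measure_mono fun v hv => hv.2

end SignedSum

variable {μ : Measure XX}

lemma measurableSet_cylPt (Γ : Finset ℕ) (u : (i : Γ) → Xc i) : MeasurableSet (cylPt Γ u) :=
  measurable_pi_lambda (fun (x : XX) (i : Γ) => x i) (fun i => measurable_pi_apply (i : ℕ))
    (measurableSet_singleton u)

lemma measure_cylSet (hμ : IsProductMeasure μ) (Γ : Finset ℕ)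
    (A : Finset ((i : Γ) → Xc i)) :
    μ (cylSet Γ A) = ∑ u ∈ A, ∏ i : Γ, w i (u i) := by
  have hA : cylSet Γ A = ⋃ u ∈ A, cylPt Γ u := by ext x; simp [cylSet, cylPt]
  rw [hA, measure_biUnion_finset (fun u _ v _ huv => ?_) (fun u _ => measurableSet_cylPt Γ u)]
  · exact sum_congr rfl fun u _ => hμ Γ u
  · exact Set.disjoint_left.2 fun x hu hv => huv (hu.symm.trans hv)

lemma sum_w_ne_zero (n : ℕ) : ∑ a ∈ univ.erase (0 : Xc n), w n a = 2⁻¹ := by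
  have hw : ∀ a ∈ univ.erase (0 : Xc n), w n a = 2⁻¹ * (5 ^ (n + 1))⁻¹ := fun a ha => by
    rw [w, if_neg (ne_of_mem_erase ha), one_div, ENNReal.mul_inv (by simp) (by simp)]
  rw [sum_congr rfl hw, sum_const, card_erase_of_mem (mem_univ _), card_univ, Fintype.card_fin,
    add_tsub_cancel_right, nsmul_eq_mul, Nat.cast_pow, Nat.cast_ofNat, mul_left_comm,
    ENNReal.mul_inv_cancel (by simp) (by simp), mul_one]

def nonzeroBits (Γ : Finset ℕ) (x : XX) : Γ → Bool := fun j => decide (x j ≠ 0)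

lemma measurable_nonzeroBits (Γ : Finset ℕ) : Measurable (nonzeroBits Γ) :=
  measurable_pi_lambda _ fun j =>
    (Measurable.of_discrete (f := fun a : Xc j => decide (a ≠ 0))).comp
      (measurable_pi_apply (j : ℕ))

lemma measure_nonzeroBits_preimage_singleton (hμ : IsProductMeasure μ) (Γ : Finset ℕ)
    (v : Γ → Bool) : μ (nonzeroBits Γ ⁻¹' {v}) = 2⁻¹ ^ Γ.card := by
  set C : (j : Γ) → Finset (Xc j) := fun j => if v j then univ.erase 0 else {0}
  have hfib : nonzeroBits Γ ⁻¹' {v} = cylSet Γ (Fintype.piFinset C) := by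
    ext x
    simp only [Set.mem_preimage, Set.mem_singleton_iff, cylSet, Set.mem_ofPred_eq, mem_coe,
      Fintype.mem_piFinset, funext_iff]
    refine forall_congr' fun j => ?_
    cases hv : v j <;> simp [C, hv, nonzeroBits]
  rw [hfib, measure_cylSet hμ, ← prod_univ_sum,
    prod_congr rfl fun j _ => (?_ : ∑ a ∈ C j, w j a = 2⁻¹), prod_const, card_univ,
    Fintype.card_coe]
  cases hv : v j
  · simp [C, hv, w]
  · simpa [C, hv] using sum_w_ne_zero j

lemma measure_nonzeroBits_preimage (hμ : IsProductMeasure μ) (Γ : Finset ℕ)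
    (s : Set (Γ → Bool)) : μ (nonzeroBits Γ ⁻¹' s) = uniformOn Set.univ s := by
  rw [← Measure.map_apply (measurable_nonzeroBits Γ) (Set.toFinite s).measurableSet]
  congr 1
  refine Measure.ext_of_singleton fun v => ?_
  rw [Measure.map_apply (measurable_nonzeroBits Γ) (measurableSet_singleton v),
    measure_nonzeroBits_preimage_singleton hμ, uniformOn_univ, Measure.count_singleton,
    Fintype.card_fun, Fintype.card_bool, Fintype.card_coe, Nat.cast_pow, Nat.cast_ofNat, one_div,
    ENNReal.inv_pow]

lemma IsProductMeasure.isProbabilityMeasure (hμ : IsProductMeasure μ) : IsProbabilityMeasure μ :=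
  ⟨by simpa using measure_nonzeroBits_preimage hμ ∅ Set.univ⟩

-- Lean coordinate `j` is paper coordinate `j + 1`, whence the weight `j + 1`.
def rademacherSum (i : ℕ) (x : XX) : ℤ :=
  signedSum (fun j : range i => (j : ℤ) + 1) (nonzeroBits (range i) x)

lemma aMu_eq (j : ℕ) (x : XX) :
    aMu j x = Real.log 2 + Real.log 5 / 2 *
      ((j + 1) + if x j ≠ 0 then ((j : ℝ) + 1) else -((j : ℝ) + 1)) := by
  by_cases h : x j = 0
  · simp [aMu, wR, h]
  · simp only [aMu, wR, h, if_false, ne_eq, not_false_eq_true, if_true, one_div, Real.log_inv,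
      neg_neg]
    rw [Real.log_mul (by norm_num) (by positivity), Real.log_pow]
    push_cast
    ring

lemma sum_aMu_eq (i : ℕ) (x : XX) :
    ∑ j ∈ range i, aMu j x = i * Real.log 2 + Real.log 5 / 2 *
      (∑ j ∈ range i, ((j : ℝ) + 1) + rademacherSum i x) := by
  simp only [aMu_eq, sum_add_distrib, ← mul_sum, sum_const, card_range, nsmul_eq_mul,
    rademacherSum, signedSum, nonzeroBits, Int.cast_sum, apply_ite (Int.cast : ℤ → ℝ),
    Int.cast_neg, Int.cast_add, Int.cast_natCast, Int.cast_one, decide_eq_true_eq]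
  rw [sum_coe_sort (range i) fun j => if x j ≠ 0 then (j : ℝ) + 1 else -((j : ℝ) + 1)]

lemma exists_quantile_rademacherSum (hμ : IsProductMeasure μ) {i : ℕ} (hi : 1 ≤ i) :
    ∃ m : ℕ, i ≤ m ∧ 1 - 2 * 8⁻¹ ≤ μ {x | |rademacherSum i x| ≤ m} ∧
      8⁻¹ ≤ μ {x | m ≤ rademacherSum i x} ∧
      8⁻¹ ≤ μ {x | rademacherSum i x ≤ -m} := by
  have := hμ.isProbabilityMeasure
  set c : range i → ℤ := fun j => (j : ℤ) + 1
  have hlaw : ∀ P : ℤ → Prop, μ {x | P (signedSum c (nonzeroBits (range i) x))} =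
      uniformOn Set.univ {v | P (signedSum c v)} := fun P =>
    measure_nonzeroBits_preimage hμ (range i) {v | P (signedSum c v)}
  have hsymm : ∀ n : ℤ, μ {x | rademacherSum i x ≤ -n} = μ {x | n ≤ rademacherSum i x} :=
    fun n => (hlaw (· ≤ -n)).trans <|
      (uniformOn_signedSum_le_neg c n).trans (hlaw (n ≤ ·)).symm
  have htail : 8⁻¹ < μ {x | (i : ℤ) ≤ rademacherSum i x} := by
    have hc : c ⟨i - 1, by simp; omega⟩ = i := by simp [c]; omega
    rw [← hc]
    exact (hlaw _).trans_gt ((ENNReal.inv_lt_inv.2 (by norm_num)).trans_le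
      (inv_four_le_uniformOn_le_signedSum c _))
  have hY : Measurable (rademacherSum i) :=
    (Measurable.of_discrete (f := signedSum c)).comp (measurable_nonzeroBits (range i))
  exact exists_symmetric_quantile hY hsymm (by norm_num) htail

theorem statement16 (μ : Measure XX) (hμ : IsProductMeasure μ) :
    ∃ (b c : ℕ → ℝ) (β : ℝ),
      (∀ i, 1 ≤ i → 0 < b i) ∧
      (∀ M : ℝ, ∃ i, 1 ≤ i ∧ M < b i) ∧
      0 < β ∧ β < 1 / 2 ∧
      ∀ i, 1 ≤ i →
        ENNReal.ofReal (1 - 2 * β) ≤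
            μ {x | |c i + ∑ j ∈ Finset.range i, aMu j x| ≤ b i} ∧
          ENNReal.ofReal β ≤ μ {x | b i ≤ c i + ∑ j ∈ Finset.range i, aMu j x} ∧
          ENNReal.ofReal β ≤ μ {x | c i + ∑ j ∈ Finset.range i, aMu j x ≤ -(b i)} := by
  set L := Real.log 5 / 2
  have hL : 0 < L := div_pos (Real.log_pos (by norm_num)) two_pos
  choose! m hm_ge hm using fun i (hi : 1 ≤ i) => exists_quantile_rademacherSum hμ hi
  have h8 : ENNReal.ofReal (1 / 8) = 8⁻¹ := by
    rw [one_div, ENNReal.ofReal_inv_of_pos (by norm_num)]; norm_num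
  have h34 : ENNReal.ofReal (1 - 2 * (1 / 8)) = 1 - 2 * 8⁻¹ := by
    rw [ENNReal.ofReal_sub _ (by norm_num), ENNReal.ofReal_mul (by norm_num), h8]; norm_num
  refine ⟨fun i => L * m i, fun i => -(i * Real.log 2 + L * ∑ j ∈ range i, ((j : ℝ) + 1)),
    1 / 8,
    fun i hi => mul_pos hL (by exact_mod_cast (hi.trans (hm_ge i hi))), fun M => ?_,
    by norm_num, by norm_num, fun i hi => ?_⟩
  · obtain ⟨n, hn⟩ := exists_nat_gt (M / L)
    have hmn : (n : ℝ) + 1 ≤ m (n + 1) := by exact_mod_cast hm_ge (n + 1) (by omega)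
    rw [div_lt_iff₀ hL] at hn
    exact ⟨n + 1, by omega, by nlinarith⟩
  · have hcentered : ∀ x, -(i * Real.log 2 + L * ∑ j ∈ range i, ((j : ℝ) + 1)) +
        ∑ j ∈ range i, aMu j x = L * rademacherSum i x := fun x => by
      rw [sum_aMu_eq]; ring
    simp only [hcentered, h8, h34, abs_mul, abs_of_pos hL, ← mul_neg, mul_le_mul_iff_right₀ hL]
    exact_mod_cast hm i hi
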